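/- arXiv:2004.10649 — 2 statements merged into one kernel-verified Lean document; each statement's English description precedes it below -/
import Mathlib

section
/- Let M₁ and M₂ be pointed metric spaces, let M = M₁ ∐ M₂ be their metric sum, and let Y be a real Banach space. If the pair (M, Y) has the Lip-BPB property, then both pairs (M₁, Y) and (M₂, Y) have the Lip-BPB property. -/
open Set Metric NNReal MeasureTheory

/-- A Lipschitz map vanishing at the base point `z`, i.e. an element of `Lip₀(M,Y)`. -/
def IsLip0 {M Y : Type*} [MetricSpace M] [NormedAddCommGroup Y]
    (z : M) (F : M → Y) : Prop :=
  (∃ K : ℝ≥0, LipschitzWith K F) ∧ F z = 0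

/-- The Lipschitz norm `‖F‖_L = sup {‖F p - F q‖ / d(p,q) : p ≠ q}`. -/
noncomputable def lipNorm {M Y : Type*} [MetricSpace M] [NormedAddCommGroup Y]
    (F : M → Y) : ℝ :=
  sSup {r : ℝ | ∃ p q : M, p ≠ q ∧ r = ‖F p - F q‖ / dist p q}

/-- `F` strongly attains its norm. -/
def StronglyAttains {M Y : Type*} [MetricSpace M] [NormedAddCommGroup Y]
    (F : M → Y) : Prop :=
  ∃ p q : M, p ≠ q ∧ ‖F p - F q‖ = lipNorm F * dist p q

/-- `F` is Lipschitz compact: its Lipschitz image is relatively compact. -/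
def IsLipCompact {M Y : Type*} [MetricSpace M] [NormedAddCommGroup Y] [NormedSpace ℝ Y]
    (F : M → Y) : Prop :=
  IsCompact (closure {y : Y | ∃ p q : M, p ≠ q ∧ y = (dist p q)⁻¹ • (F p - F q)})

/-- The pair `(M,Y)` has the Lip-BPB property witnessed by the function `η`. -/
def LipBPBWith (M : Type*) [MetricSpace M] (z : M)
    (Y : Type*) [NormedAddCommGroup Y] (η : ℝ → ℝ) : Prop :=
  (∀ ε > 0, η ε > 0) ∧
  ∀ ε > 0, ∀ F : M → Y, IsLip0 z F → lipNorm F = 1 →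
    ∀ p q : M, p ≠ q → ‖F p - F q‖ > (1 - η ε) * dist p q →
      ∃ G : M → Y, IsLip0 z G ∧ ∃ r s : M, r ≠ s ∧
        ‖G r - G s‖ = dist r s ∧ lipNorm G = 1 ∧
        lipNorm (fun x => G x - F x) < ε ∧
        (dist p r + dist q s) / dist p q < ε

/-- The pair `(M,Y)` has the Lip-BPB property. -/
def LipBPB (M : Type*) [MetricSpace M] (z : M)
    (Y : Type*) [NormedAddCommGroup Y] : Prop :=
  ∃ η : ℝ → ℝ, LipBPBWith M z Y η

/-- The pair `(M,Y)` has the Lip-BPB property for Lipschitz compact maps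
witnessed by the function `η`. -/
def LipBPBCompactWith (M : Type*) [MetricSpace M] (z : M)
    (Y : Type*) [NormedAddCommGroup Y] [NormedSpace ℝ Y] (η : ℝ → ℝ) : Prop :=
  (∀ ε > 0, η ε > 0) ∧
  ∀ ε > 0, ∀ F : M → Y, IsLip0 z F → IsLipCompact F → lipNorm F = 1 →
    ∀ p q : M, p ≠ q → ‖F p - F q‖ > (1 - η ε) * dist p q →
      ∃ G : M → Y, IsLip0 z G ∧ IsLipCompact G ∧ ∃ r s : M, r ≠ s ∧
        ‖G r - G s‖ = dist r s ∧ lipNorm G = 1 ∧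
        lipNorm (fun x => G x - F x) < ε ∧
        (dist p r + dist q s) / dist p q < ε

/-- The pair `(M,Y)` has the Lip-BPB property for Lipschitz compact maps. -/
def LipBPBCompact (M : Type*) [MetricSpace M] (z : M)
    (Y : Type*) [NormedAddCommGroup Y] [NormedSpace ℝ Y] : Prop :=
  ∃ η : ℝ → ℝ, LipBPBCompactWith M z Y η

/-- `SA(M,Y)` is dense in `Lip₀(M,Y)`. -/
def SADense (M : Type*) [MetricSpace M] (z : M)
    (Y : Type*) [NormedAddCommGroup Y] : Prop :=
  ∀ F : M → Y, IsLip0 z F → ∀ ε > 0,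
    ∃ G : M → Y, IsLip0 z G ∧ StronglyAttains G ∧ lipNorm (fun x => G x - F x) < ε

/-- `SA_K(M,Y)` is dense in `Lipc(M,Y)`. -/
def SAKDense (M : Type*) [MetricSpace M] (z : M)
    (Y : Type*) [NormedAddCommGroup Y] [NormedSpace ℝ Y] : Prop :=
  ∀ F : M → Y, IsLip0 z F → IsLipCompact F → ∀ ε > 0,
    ∃ G : M → Y, IsLip0 z G ∧ IsLipCompact G ∧ StronglyAttains G ∧
      lipNorm (fun x => G x - F x) < ε

/-- `S` (with base point `z₀`) is the metric sum `M₁ ∐ M₂` of the pointed metric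
spaces `(M₁, z₁)` and `(M₂, z₂)`, via the inclusions `e₁`, `e₂`. -/
structure IsMetricSum2 {M₁ M₂ S : Type*} [MetricSpace M₁] [MetricSpace M₂] [MetricSpace S]
    (z₁ : M₁) (z₂ : M₂) (z₀ : S) (e₁ : M₁ → S) (e₂ : M₂ → S) : Prop where
  base₁ : e₁ z₁ = z₀
  base₂ : e₂ z₂ = z₀
  dist₁ : ∀ x y : M₁, dist (e₁ x) (e₁ y) = dist x y
  dist₂ : ∀ x y : M₂, dist (e₂ x) (e₂ y) = dist x y
  dist₁₂ : ∀ (x : M₁) (y : M₂), dist (e₁ x) (e₂ y) = dist x z₁ + dist z₂ y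
  cover : ∀ s : S, (∃ x : M₁, e₁ x = s) ∨ (∃ y : M₂, e₂ y = s)

/-- `S` (with base point `z₀`) is the metric sum `∐_{i ∈ ι} M i` of the family of pointed
metric spaces `(M i, z i)`, via the inclusions `e i`. -/
structure IsMetricSumFamily {ι : Type*} {M : ι → Type*} [∀ i, MetricSpace (M i)]
    {S : Type*} [MetricSpace S]
    (z : ∀ i, M i) (z₀ : S) (e : ∀ i, M i → S) : Prop where
  base : ∀ i, e i (z i) = z₀
  dist_eq : ∀ (i) (x y : M i), dist (e i x) (e i y) = dist x y
  dist_ne : ∀ (i j), i ≠ j → ∀ (x : M i) (y : M j),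
    dist (e i x) (e j y) = dist x (z i) + dist (z j) y
  cover : ∀ s : S, ∃ (i : ι) (x : M i), e i x = s

section Aux

variable {M Y : Type*} [MetricSpace M] [NormedAddCommGroup Y]

lemma bdd_ratset {F : M → Y} {c : ℝ} (h : ∀ p q : M, ‖F p - F q‖ ≤ c * dist p q) :
    BddAbove {r : ℝ | ∃ p q : M, p ≠ q ∧ r = ‖F p - F q‖ / dist p q} := by
  refine ⟨c, ?_⟩
  rintro r ⟨p, q, hpq, rfl⟩
  rw [div_le_iff₀ (dist_pos.mpr hpq)]
  exact h p q

lemma norm_le_lipNorm {F : M → Y} {c : ℝ} (h : ∀ p q : M, ‖F p - F q‖ ≤ c * dist p q)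
    (p q : M) : ‖F p - F q‖ ≤ lipNorm F * dist p q := by
  rcases eq_or_ne p q with rfl | hpq
  · simp
  · have h1 : ‖F p - F q‖ / dist p q ≤ lipNorm F :=
      le_csSup (bdd_ratset h) ⟨p, q, hpq, rfl⟩
    rw [div_le_iff₀ (dist_pos.mpr hpq)] at h1
    exact h1

lemma bdd_ratset_one {F : M → Y} (h : ∀ p q : M, ‖F p - F q‖ ≤ dist p q) :
    BddAbove {r : ℝ | ∃ p q : M, p ≠ q ∧ r = ‖F p - F q‖ / dist p q} :=
  bdd_ratset (c := 1) (fun p q => by rw [one_mul]; exact h p q)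

lemma lipNorm_nonneg (F : M → Y) : 0 ≤ lipNorm F := by
  apply Real.sSup_nonneg
  rintro r ⟨p, q, hpq, rfl⟩
  positivity

theorem lipBPB_restrict {M₁ M₂ S Y : Type*} [MetricSpace M₁] [MetricSpace M₂]
    [MetricSpace S] [NormedAddCommGroup Y]
    (z₁ : M₁) (z₂ : M₂) (z₀ : S) (e₁ : M₁ → S) (e₂ : M₂ → S)
    (hb₁ : e₁ z₁ = z₀)
    (hd₁ : ∀ x y : M₁, dist (e₁ x) (e₁ y) = dist x y)
    (hd₁₂ : ∀ (x : M₁) (y : M₂), dist (e₁ x) (e₂ y) = dist x z₁ + dist z₂ y)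
    (hcov : ∀ s : S, (∃ x : M₁, e₁ x = s) ∨ (∃ y : M₂, e₂ y = s))
    (h : LipBPB S z₀ Y) : LipBPB M₁ z₁ Y := by
  classical
  obtain ⟨η, hη, hBPB⟩ := h
  refine ⟨fun ε => η (min ε (1/2)), fun ε hε => hη _ (lt_min hε (by norm_num)), ?_⟩
  intro ε hε F hF hFn p q hpq hFpq
  set ε' := min ε (1/2) with hε'def
  have hε'pos : 0 < ε' := lt_min hε (by norm_num)
  have hε'le : ε' ≤ ε := min_le_left _ _
  have hε'half : ε' ≤ 1/2 := min_le_right _ _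
  have he₁inj : Function.Injective e₁ := fun a b hab => by
    have h1 := hd₁ a b
    rw [hab, dist_self] at h1
    exact dist_eq_zero.mp h1.symm
  obtain ⟨⟨K, hK⟩, hF0⟩ := hF
  have hKd : ∀ x y : M₁, ‖F x - F y‖ ≤ (K : ℝ) * dist x y := fun x y => by
    rw [← dist_eq_norm]; exact hK.dist_le_mul x y
  have hF1 : ∀ x y : M₁, ‖F x - F y‖ ≤ dist x y := fun x y => by
    have h1 := norm_le_lipNorm hKd x y
    rwa [hFn, one_mul] at h1
  -- the extension of F to S by 0 on M₂
  set Ft : S → Y := fun s => if h : ∃ x : M₁, e₁ x = s then F h.choose else 0 with hFtdef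
  have hFte : ∀ x : M₁, Ft (e₁ x) = F x := fun x => by
    have hx : ∃ x' : M₁, e₁ x' = e₁ x := ⟨x, rfl⟩
    simp only [hFtdef, dif_pos hx]
    exact congrArg F (he₁inj hx.choose_spec)
  have hext : ∀ C : ℝ, 0 ≤ C → (∀ x y : M₁, ‖F x - F y‖ ≤ C * dist x y) →
      ∀ a b : S, ‖Ft a - Ft b‖ ≤ C * dist a b := by
    intro C hC hFC a b
    by_cases ha : ∃ x : M₁, e₁ x = a
    · obtain ⟨x, rfl⟩ := ha
      by_cases hb : ∃ y : M₁, e₁ y = b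
      · obtain ⟨y, rfl⟩ := hb
        rw [hFte, hFte, hd₁]
        exact hFC x y
      · obtain ⟨y, rfl⟩ := (hcov b).resolve_left hb
        have hb0 : Ft (e₂ y) = 0 := dif_neg hb
        rw [hFte, hb0, sub_zero, hd₁₂]
        calc ‖F x‖ = ‖F x - F z₁‖ := by rw [hF0, sub_zero]
          _ ≤ C * dist x z₁ := hFC x z₁
          _ ≤ C * (dist x z₁ + dist z₂ y) := by nlinarith [dist_nonneg (x := z₂) (y := y)]
    · have ha0 : Ft a = 0 := dif_neg ha
      obtain ⟨y, rfl⟩ := (hcov a).resolve_left ha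
      by_cases hb : ∃ x : M₁, e₁ x = b
      · obtain ⟨x, rfl⟩ := hb
        rw [ha0, hFte, zero_sub, norm_neg, dist_comm, hd₁₂]
        calc ‖F x‖ = ‖F x - F z₁‖ := by rw [hF0, sub_zero]
          _ ≤ C * dist x z₁ := hFC x z₁
          _ ≤ C * (dist x z₁ + dist z₂ y) := by nlinarith [dist_nonneg (x := z₂) (y := y)]
      · have hb0 : Ft b = 0 := dif_neg hb
        rw [ha0, hb0, sub_zero, norm_zero]
        positivity
  have hFt0 : Ft z₀ = 0 := by rw [← hb₁, hFte, hF0]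
  have hFt1 : ∀ a b : S, ‖Ft a - Ft b‖ ≤ dist a b := fun a b => by
    have h1 := hext 1 zero_le_one (fun x y => by rw [one_mul]; exact hF1 x y) a b
    rwa [one_mul] at h1
  have hFtK : ∀ a b : S, ‖Ft a - Ft b‖ ≤ (K : ℝ) * dist a b :=
    hext K K.coe_nonneg hKd
  have hFtn : lipNorm Ft = 1 := by
    apply le_antisymm
    · apply Real.sSup_le _ zero_le_one
      rintro r ⟨a, b, hab, rfl⟩
      rw [div_le_one (dist_pos.mpr hab)]
      exact hFt1 a b
    · rw [← hFn]
      refine csSup_le_csSup (bdd_ratset_one hFt1)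
        ⟨‖F p - F q‖ / dist p q, p, q, hpq, rfl⟩ ?_
      rintro r ⟨x, y, hxy, rfl⟩
      exact ⟨e₁ x, e₁ y, fun h => hxy (he₁inj h), by rw [hFte, hFte, hd₁]⟩
  have hD : 0 < dist p q := dist_pos.mpr hpq
  obtain ⟨G, hG, r, s, hrs, hatt, hGn1, hclose, hdist⟩ :=
    hBPB ε' hε'pos Ft
      ⟨⟨K, LipschitzWith.of_dist_le_mul fun a b => by
        rw [dist_eq_norm]; exact hFtK a b⟩, hFt0⟩
      hFtn (e₁ p) (e₁ q) (fun h => hpq (he₁inj h))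
      (by rw [hFte, hFte, hd₁]; exact hFpq)
  obtain ⟨⟨KG, hKG⟩, hG0⟩ := hG
  have hKGd : ∀ a b : S, ‖G a - G b‖ ≤ (KG : ℝ) * dist a b := fun a b => by
    rw [← dist_eq_norm]; exact hKG.dist_le_mul a b
  have hGle : ∀ a b : S, ‖G a - G b‖ ≤ dist a b := fun a b => by
    have h1 := norm_le_lipNorm hKGd a b
    rwa [hGn1, one_mul] at h1
  rw [hd₁ p q, div_lt_iff₀ hD] at hdist
  have hε'D : ε' * dist p q ≤ (1/2) * dist p q :=
    mul_le_mul_of_nonneg_right hε'half hD.le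
  -- produce an attaining pair inside M₁
  have main : ∃ a b : M₁, a ≠ b ∧ ‖G (e₁ a) - G (e₁ b)‖ = dist a b ∧
      dist p a + dist q b ≤ dist (e₁ p) r + dist (e₁ q) s := by
    rcases hcov r with ⟨r', rfl⟩ | ⟨y, rfl⟩
    · rcases hcov s with ⟨s', rfl⟩ | ⟨y, rfl⟩
      · refine ⟨r', s', fun h => hrs (congrArg e₁ h), ?_, ?_⟩
        · rw [hatt, hd₁]
        · rw [← hd₁ p r', ← hd₁ q s']
      · -- r = e₁ r', s = e₂ y
        have h1 : ‖G (e₁ r') - G z₀‖ ≤ dist r' z₁ := by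
          have := hGle (e₁ r') (e₁ z₁)
          rwa [hd₁ r' z₁, hb₁] at this
        have h2 : ‖G z₀ - G (e₂ y)‖ ≤ dist z₂ y := by
          have := hGle (e₁ z₁) (e₂ y)
          rwa [hd₁₂ z₁ y, dist_self, zero_add, hb₁] at this
        have htr : ‖G (e₁ r') - G (e₂ y)‖ ≤ ‖G (e₁ r') - G z₀‖ + ‖G z₀ - G (e₂ y)‖ := by
          calc ‖G (e₁ r') - G (e₂ y)‖
              = ‖(G (e₁ r') - G z₀) + (G z₀ - G (e₂ y))‖ := by rw [sub_add_sub_cancel]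
            _ ≤ _ := norm_add_le _ _
        have hsumeq : dist r' z₁ + dist z₂ y ≤ ‖G (e₁ r') - G z₀‖ + ‖G z₀ - G (e₂ y)‖ := by
          calc dist r' z₁ + dist z₂ y = dist (e₁ r') (e₂ y) := (hd₁₂ r' y).symm
            _ = ‖G (e₁ r') - G (e₂ y)‖ := hatt.symm
            _ ≤ _ := htr
        have heq1 : ‖G (e₁ r') - G z₀‖ = dist r' z₁ := by linarith
        rcases eq_or_ne r' z₁ with heqz | hr'
        · exfalso
          have hpz : dist (e₁ p) (e₁ r') = dist p z₁ := by rw [hd₁, heqz]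
          have hqz : dist (e₁ q) (e₂ y) = dist q z₁ + dist z₂ y := hd₁₂ q y
          have htri : dist p q ≤ dist p z₁ + dist q z₁ := by
            rw [dist_comm q z₁]; exact dist_triangle p z₁ q
          have hy : 0 ≤ dist z₂ y := dist_nonneg
          linarith
        · refine ⟨r', z₁, hr', ?_, ?_⟩
          · rw [hb₁]; exact heq1
          · have h3 : dist (e₁ p) (e₁ r') = dist p r' := hd₁ p r'
            have h4 : dist (e₁ q) (e₂ y) = dist q z₁ + dist z₂ y := hd₁₂ q y
            have hy : 0 ≤ dist z₂ y := dist_nonneg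
            linarith
    · rcases hcov s with ⟨s', rfl⟩ | ⟨y', rfl⟩
      · -- r = e₂ y, s = e₁ s'
        have h1 : ‖G (e₂ y) - G z₀‖ ≤ dist z₂ y := by
          have := hGle (e₁ z₁) (e₂ y)
          rwa [hd₁₂ z₁ y, dist_self, zero_add, hb₁, norm_sub_rev] at this
        have h2 : ‖G z₀ - G (e₁ s')‖ ≤ dist z₁ s' := by
          have := hGle (e₁ z₁) (e₁ s')
          rwa [hd₁ z₁ s', hb₁] at this
        have htr : ‖G (e₂ y) - G (e₁ s')‖ ≤ ‖G (e₂ y) - G z₀‖ + ‖G z₀ - G (e₁ s')‖ := by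
          calc ‖G (e₂ y) - G (e₁ s')‖
              = ‖(G (e₂ y) - G z₀) + (G z₀ - G (e₁ s'))‖ := by rw [sub_add_sub_cancel]
            _ ≤ _ := norm_add_le _ _
        have hsumeq : dist z₂ y + dist z₁ s' ≤ ‖G (e₂ y) - G z₀‖ + ‖G z₀ - G (e₁ s')‖ := by
          calc dist z₂ y + dist z₁ s'
              = dist s' z₁ + dist z₂ y := by rw [dist_comm s' z₁]; ring
            _ = dist (e₁ s') (e₂ y) := (hd₁₂ s' y).symm
            _ = dist (e₂ y) (e₁ s') := dist_comm _ _
            _ = ‖G (e₂ y) - G (e₁ s')‖ := hatt.symm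
            _ ≤ _ := htr
        have heq2 : ‖G z₀ - G (e₁ s')‖ = dist z₁ s' := by linarith
        rcases eq_or_ne s' z₁ with heqz | hs'
        · exfalso
          have hpz : dist (e₁ p) (e₂ y) = dist p z₁ + dist z₂ y := hd₁₂ p y
          have hqz : dist (e₁ q) (e₁ s') = dist q z₁ := by rw [hd₁, heqz]
          have htri : dist p q ≤ dist p z₁ + dist q z₁ := by
            rw [dist_comm q z₁]; exact dist_triangle p z₁ q
          have hy : 0 ≤ dist z₂ y := dist_nonneg
          linarith
        · refine ⟨z₁, s', fun h => hs' h.symm, ?_, ?_⟩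
          · rw [hb₁]; exact heq2
          · have h3 : dist (e₁ p) (e₂ y) = dist p z₁ + dist z₂ y := hd₁₂ p y
            have h4 : dist (e₁ q) (e₁ s') = dist q s' := hd₁ q s'
            have hy : 0 ≤ dist z₂ y := dist_nonneg
            linarith
      · exfalso
        have hpz : dist (e₁ p) (e₂ y) = dist p z₁ + dist z₂ y := hd₁₂ p y
        have hqz : dist (e₁ q) (e₂ y') = dist q z₁ + dist z₂ y' := hd₁₂ q y'
        have htri : dist p q ≤ dist p z₁ + dist q z₁ := by
          rw [dist_comm q z₁]; exact dist_triangle p z₁ q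
        have hy : 0 ≤ dist z₂ y := dist_nonneg
        have hy' : 0 ≤ dist z₂ y' := dist_nonneg
        linarith
  obtain ⟨a, b, hab, hGab, hle⟩ := main
  refine ⟨fun x => G (e₁ x), ⟨⟨KG, LipschitzWith.of_dist_le_mul fun x y => by
      rw [← hd₁ x y]; exact hKG.dist_le_mul (e₁ x) (e₁ y)⟩,
      by show G (e₁ z₁) = 0; rw [hb₁]; exact hG0⟩, a, b, hab, hGab, ?_, ?_, ?_⟩
  · -- lipNorm of the restriction is 1
    have hbdd : ∀ x y : M₁, ‖G (e₁ x) - G (e₁ y)‖ ≤ dist x y := fun x y => by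
      rw [← hd₁ x y]; exact hGle (e₁ x) (e₁ y)
    apply le_antisymm
    · apply Real.sSup_le _ zero_le_one
      rintro t ⟨x, y, hxy, rfl⟩
      rw [div_le_one (dist_pos.mpr hxy)]
      exact hbdd x y
    · apply le_csSup (bdd_ratset_one hbdd)
      exact ⟨a, b, hab, by rw [hGab, div_self (dist_pos.mpr hab).ne']⟩
  · -- lipNorm of the difference is < ε
    have hdiffK : ∀ u v : S, ‖(G u - Ft u) - (G v - Ft v)‖ ≤ ((KG : ℝ) + K) * dist u v := by
      intro u v
      calc ‖(G u - Ft u) - (G v - Ft v)‖ = ‖(G u - G v) - (Ft u - Ft v)‖ := by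
            rw [sub_sub_sub_comm]
        _ ≤ ‖G u - G v‖ + ‖Ft u - Ft v‖ := norm_sub_le _ _
        _ ≤ (KG : ℝ) * dist u v + (K : ℝ) * dist u v := add_le_add (hKGd u v) (hFtK u v)
        _ = ((KG : ℝ) + K) * dist u v := by ring
    have hsub : lipNorm (fun x => G (e₁ x) - F x) ≤ lipNorm (fun u => G u - Ft u) := by
      apply Real.sSup_le _ (lipNorm_nonneg _)
      rintro t ⟨x, y, hxy, rfl⟩
      apply le_csSup (bdd_ratset hdiffK)
      refine ⟨e₁ x, e₁ y, fun h => hxy (he₁inj h), ?_⟩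
      rw [hFte, hFte, hd₁]
    calc lipNorm (fun x => G (e₁ x) - F x) ≤ lipNorm (fun u => G u - Ft u) := hsub
      _ < ε' := hclose
      _ ≤ ε := hε'le
  · rw [div_lt_iff₀ hD]
    have : ε' * dist p q ≤ ε * dist p q := mul_le_mul_of_nonneg_right hε'le hD.le
    linarith

end Aux

/-- If `S = M₁ ∐ M₂` is the metric sum of two pointed metric spaces and `(S, Y)` has the
Lip-BPB property, then both `(M₁, Y)` and `(M₂, Y)` have the Lip-BPB property. -/
theorem lipBPB_of_metricSum2 {M₁ M₂ S Y : Type*}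
    [MetricSpace M₁] [CompleteSpace M₁] [MetricSpace M₂] [CompleteSpace M₂]
    [MetricSpace S] [CompleteSpace S]
    [NormedAddCommGroup Y] [NormedSpace ℝ Y] [CompleteSpace Y]
    (z₁ : M₁) (z₂ : M₂) (z₀ : S) (e₁ : M₁ → S) (e₂ : M₂ → S)
    (hsum : IsMetricSum2 z₁ z₂ z₀ e₁ e₂)
    (h : LipBPB S z₀ Y) :
    LipBPB M₁ z₁ Y ∧ LipBPB M₂ z₂ Y := by
  constructor
  · exact lipBPB_restrict z₁ z₂ z₀ e₁ e₂ hsum.base₁ hsum.dist₁ hsum.dist₁₂ hsum.cover h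
  · refine lipBPB_restrict z₂ z₁ z₀ e₂ e₁ hsum.base₂ hsum.dist₂ ?_ (fun s => (hsum.cover s).symm) h
    intro y x
    rw [dist_comm, hsum.dist₁₂ x y, dist_comm x z₁, dist_comm z₂ y]
    ring
end

section
/- Let M be a pointed metric space such that the pair (M, ℝ) has the Lip-BPB property, let ρ ∈ [0,1), and let Y be a real Banach space having ACK structure with parameter ρ. Then the pair (M, Y) has the Lip-BPB property for Lipschitz compact maps. -/
open Set Metric NNReal MeasureTheory

/-- A set of functionals on `Y` is weak-star open. -/
def IsWeakStarOpen {Y : Type*} [NormedAddCommGroup Y] [NormedSpace ℝ Y]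
    (U : Set (Y →L[ℝ] ℝ)) : Prop :=
  IsOpen (X := WeakDual ℝ Y) (StrongDual.toWeakDual '' U)

/-- `Γ ⊆ B_{Y*}` is a 1-norming set. -/
def IsOneNorming {Y : Type*} [NormedAddCommGroup Y] [NormedSpace ℝ Y]
    (Γ : Set (Y →L[ℝ] ℝ)) : Prop :=
  (∀ φ ∈ Γ, ‖φ‖ ≤ 1) ∧ ∀ y : Y, ‖y‖ = sSup {t : ℝ | ∃ φ ∈ Γ, t = |φ y|}

/-- `Y` has ACK structure with parameter `ρ`, witnessed by the 1-norming set `Γ`. -/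
def ACKWith (Y : Type*) [NormedAddCommGroup Y] [NormedSpace ℝ Y]
    (ρ : ℝ) (Γ : Set (Y →L[ℝ] ℝ)) : Prop :=
  IsOneNorming Γ ∧
  ∀ ε > (0 : ℝ), ∀ U : Set (Y →L[ℝ] ℝ), U.Nonempty → U ⊆ Γ →
    (∃ W : Set (Y →L[ℝ] ℝ), IsWeakStarOpen W ∧ U = W ∩ Γ) →
    ∃ V ⊆ U, V.Nonempty ∧ ∃ y₁ ∈ V, ∃ e : Y, ‖e‖ = 1 ∧ ∃ F : Y →L[ℝ] Y,
      ‖F e‖ = 1 ∧ ‖F‖ = 1 ∧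
      y₁ (F e) = 1 ∧
      y₁.comp F = y₁ ∧
      (∀ φ ∈ Γ, φ ∉ {ψ ∈ Γ | ‖ψ.comp F‖ + (1 - ε) * ‖ψ - ψ.comp F‖ ≤ 1} →
        |φ (F e)| ≤ ρ) ∧
      (∀ φ ∈ Γ, ∃ (n : ℕ) (v : Fin n → (Y →L[ℝ] ℝ)) (c : Fin n → ℝ),
        (∀ k, v k ∈ V) ∧ (∑ k, |c k|) ≤ 1 ∧
        ‖φ.comp F - ∑ k, c k • v k‖ < ε) ∧
      (∀ φ ∈ V, |φ e - 1| ≤ ε)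

/-- `Y` has ACK structure with parameter `ρ`. -/
def HasACK (Y : Type*) [NormedAddCommGroup Y] [NormedSpace ℝ Y] (ρ : ℝ) : Prop :=
  ∃ Γ : Set (Y →L[ℝ] ℝ), ACKWith Y ρ Γ

/-- `T : M → Y` is a `Γ`-flat map. -/
def IsGammaFlat {M Y : Type*} [MetricSpace M] [NormedAddCommGroup Y] [NormedSpace ℝ Y]
    (Γ : Set (Y →L[ℝ] ℝ)) (T : M → Y) : Prop :=
  ∀ U : Set (Y →L[ℝ] ℝ), IsWeakStarOpen U → (U ∩ Γ).Nonempty → ∀ δ > (0 : ℝ),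
    ∃ V : Set (Y →L[ℝ] ℝ), IsWeakStarOpen V ∧ V ⊆ U ∧ (V ∩ Γ).Nonempty ∧
      ∀ φ ∈ V ∩ Γ, ∀ ψ ∈ V ∩ Γ, lipNorm (fun x => φ (T x) - ψ (T x)) < δ


/-!
Let `F` nearly attain its norm at `(p, q)`. As `F` is Lipschitz compact, the functionals in a
small weak-star neighbourhood of a functional nearly norming `F p - F q` almost agree on all
slopes of `F`; ACK structure inside that neighbourhood yields `V, y₁, e, T`. The scalar Lip-BPB
property turns `y₁ ∘ F` into `g` strongly attaining its norm at `(r, s)`, and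
`F + ((1 + t) g - y₁ ∘ F) • T e`, renormalised, is close to `F` and nearly attains its norm at
`(r, s)` with a much smaller defect. Iterating with geometrically decreasing parameters, the maps
converge in Lipschitz norm and the pairs of points converge, and the limit strongly attains its
norm.
-/

open Filter Topology Pointwise

section LipBound

variable {M Y : Type*} [MetricSpace M] [NormedAddCommGroup Y]

def LipBound (F : M → Y) (C : ℝ) : Prop :=
  ∀ x y, ‖F x - F y‖ ≤ C * dist x y

theorem LipschitzWith.lipBound {F : M → Y} {K : ℝ≥0} (h : LipschitzWith K F) : LipBound F K :=
  fun x y => by simpa only [dist_eq_norm] using h.dist_le_mul x y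

namespace LipBound

variable {F G : M → Y} {C C' : ℝ}

theorem mono (h : LipBound F C) (hle : C ≤ C') : LipBound F C' :=
  fun x y => (h x y).trans (mul_le_mul_of_nonneg_right hle dist_nonneg)

theorem add (hF : LipBound F C) (hG : LipBound G C') :
    LipBound (fun x => F x + G x) (C + C') := fun x y =>
  calc ‖F x + G x - (F y + G y)‖ = ‖(F x - F y) + (G x - G y)‖ := by congr 1; abel
    _ ≤ ‖F x - F y‖ + ‖G x - G y‖ := norm_add_le _ _
    _ ≤ (C + C') * dist x y := by linarith [hF x y, hG x y]

theorem sub (hF : LipBound F C) (hG : LipBound G C') :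
    LipBound (fun x => F x - G x) (C + C') := fun x y =>
  calc ‖F x - G x - (F y - G y)‖ = ‖(F x - F y) - (G x - G y)‖ := by congr 1; abel
    _ ≤ ‖F x - F y‖ + ‖G x - G y‖ := norm_sub_le _ _
    _ ≤ (C + C') * dist x y := by linarith [hF x y, hG x y]

theorem lipschitzWith (h : LipBound F C) : LipschitzWith C.toNNReal F :=
  LipschitzWith.of_dist_le_mul fun x y => by
    rw [dist_eq_norm]
    exact (h x y).trans (mul_le_mul_of_nonneg_right (Real.le_coe_toNNReal C) dist_nonneg)

theorem isLip0 (h : LipBound F C) {z : M} (hz : F z = 0) : IsLip0 z F :=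
  ⟨⟨_, h.lipschitzWith⟩, hz⟩

theorem norm_div_le_lipNorm (h : LipBound F C) {x y : M} (hxy : x ≠ y) :
    ‖F x - F y‖ / dist x y ≤ lipNorm F := by
  refine le_csSup ⟨C, ?_⟩ ⟨x, y, hxy, rfl⟩
  rintro _ ⟨p, q, hpq, rfl⟩
  exact (div_le_iff₀ (dist_pos.2 hpq)).2 (h p q)

theorem lipBound_lipNorm (h : LipBound F C) : LipBound F (lipNorm F) := fun x y => by
  rcases eq_or_ne x y with rfl | hxy
  · simp
  · exact (div_le_iff₀ (dist_pos.2 hxy)).1 (h.norm_div_le_lipNorm hxy)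

theorem lipNorm_le (h : LipBound F C) (hC : 0 ≤ C) : lipNorm F ≤ C := by
  refine Real.sSup_le ?_ hC
  rintro _ ⟨p, q, hpq, rfl⟩
  exact (div_le_iff₀ (dist_pos.2 hpq)).2 (h p q)

theorem lipNorm_eq {r s : M} (h : LipBound F C) (hrs : r ≠ s)
    (hatt : C * dist r s ≤ ‖F r - F s‖) : lipNorm F = C := by
  have hd := dist_pos.2 hrs
  have hC : 0 ≤ C := nonneg_of_mul_nonneg_left ((h r s).trans' (norm_nonneg _)) hd
  refine le_antisymm (h.lipNorm_le hC) ?_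
  exact ((le_div_iff₀ hd).2 hatt).trans (h.norm_div_le_lipNorm hrs)

theorem continuous (h : LipBound F C) : Continuous F :=
  h.lipschitzWith.continuous

variable [NormedSpace ℝ Y]

theorem const_smul (h : LipBound F C) (c : ℝ) : LipBound (fun x => c • F x) (|c| * C) :=
  fun x y => by
    rw [← smul_sub, norm_smul, Real.norm_eq_abs, mul_assoc]
    exact mul_le_mul_of_nonneg_left (h x y) (abs_nonneg c)

theorem smul_const {a : M → ℝ} (h : LipBound a C) (v : Y) :
    LipBound (fun x => a x • v) (C * ‖v‖) := fun x y => by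
  rw [← sub_smul, norm_smul, mul_right_comm]
  exact mul_le_mul_of_nonneg_right (h x y) (norm_nonneg v)

theorem clm_comp {Z : Type*} [NormedAddCommGroup Z] [NormedSpace ℝ Z] (h : LipBound F C)
    (L : Y →L[ℝ] Z) : LipBound (fun x => L (F x)) (‖L‖ * C) := fun x y => by
  rw [← map_sub, mul_assoc]
  exact (L.le_opNorm _).trans (mul_le_mul_of_nonneg_left (h x y) (norm_nonneg L))

end LipBound

theorem IsLip0.lipBound_lipNorm {z : M} {F : M → Y} (h : IsLip0 z F) :
    LipBound F (lipNorm F) :=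
  h.1.choose_spec.lipBound.lipBound_lipNorm

theorem lipNorm_const_smul [NormedSpace ℝ Y] (c : ℝ) (F : M → Y) :
    lipNorm (fun x => c • F x) = |c| * lipNorm F := by
  have hslope : ∀ p q : M, ‖c • F p - c • F q‖ / dist p q = |c| * (‖F p - F q‖ / dist p q) :=
    fun p q => by rw [← smul_sub, norm_smul, Real.norm_eq_abs, mul_div_assoc]
  have hset : {r : ℝ | ∃ p q : M, p ≠ q ∧ r = ‖c • F p - c • F q‖ / dist p q} =
      |c| • {r : ℝ | ∃ p q : M, p ≠ q ∧ r = ‖F p - F q‖ / dist p q} := by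
    ext r
    simp only [Set.mem_smul_set, Set.mem_ofPred_eq, smul_eq_mul]
    constructor
    · rintro ⟨p, q, hpq, rfl⟩
      exact ⟨_, ⟨p, q, hpq, rfl⟩, (hslope p q).symm⟩
    · rintro ⟨_, ⟨p, q, hpq, rfl⟩, rfl⟩
      exact ⟨p, q, hpq, (hslope p q).symm⟩
  rw [lipNorm, hset, Real.sSup_smul_of_nonneg (abs_nonneg c)]
  rfl

theorem lipBound_of_tendsto_lipBound_sub {F : M → Y} {Fs : ℕ → M → Y} {C : ℝ} {c : ℕ → ℝ}
    (hFs : ∀ n, LipBound (Fs n) C) (hF : ∀ n, LipBound (fun x => F x - Fs n x) (c n))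
    (hc : Tendsto c atTop (𝓝 0)) : LipBound F C := fun x y => by
  refine ge_of_tendsto' (x := atTop) (f := fun n => (C + c n) * dist x y) ?_ fun n => ?_
  · simpa using (tendsto_const_nhds.add hc).mul_const (dist x y)
  · simpa using ((hFs n).add (hF n)) x y

end LipBound

section LipCompact

variable {M Y : Type*} [MetricSpace M] [NormedAddCommGroup Y] [NormedSpace ℝ Y]

def slopes (F : M → Y) : Set Y :=
  {y | ∃ p q : M, p ≠ q ∧ y = (dist p q)⁻¹ • (F p - F q)}

theorem isLipCompact_iff {F : M → Y} : IsLipCompact F ↔ IsCompact (closure (slopes F)) :=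
  Iff.rfl

theorem abs_apply_sub_le_of_forall_slopes {F : M → Y} {φ ψ : Y →L[ℝ] ℝ} {δ : ℝ}
    (h : ∀ u ∈ slopes F, |φ u - ψ u| ≤ δ) (x y : M) :
    |φ (F x - F y) - ψ (F x - F y)| ≤ δ * dist x y := by
  rcases eq_or_ne x y with rfl | hxy
  · simp
  have hd := dist_pos.2 hxy
  have hmem := h _ ⟨x, y, hxy, rfl⟩
  calc |φ (F x - F y) - ψ (F x - F y)|
      = dist x y * |φ ((dist x y)⁻¹ • (F x - F y)) - ψ ((dist x y)⁻¹ • (F x - F y))| := by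
        rw [map_smul, map_smul, smul_eq_mul, smul_eq_mul, ← mul_sub, abs_mul,
          abs_of_pos (inv_pos.2 hd), ← mul_assoc, mul_inv_cancel₀ hd.ne', one_mul]
    _ ≤ δ * dist x y := by rw [mul_comm]; exact mul_le_mul_of_nonneg_right hmem hd.le

namespace IsLipCompact

variable {F G : M → Y}

theorem add (hF : IsLipCompact F) (hG : IsLipCompact G) :
    IsLipCompact (fun x => F x + G x) := by
  refine (isLipCompact_iff.1 hF |>.add hG).closure_of_subset ?_
  rintro _ ⟨p, q, hpq, rfl⟩
  refine ⟨_, subset_closure ⟨p, q, hpq, rfl⟩, _, subset_closure ⟨p, q, hpq, rfl⟩, ?_⟩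
  dsimp only
  rw [← smul_add]
  congr 1
  abel

theorem const_smul (hF : IsLipCompact F) (c : ℝ) : IsLipCompact (fun x => c • F x) := by
  refine (isLipCompact_iff.1 hF |>.smul c).closure_of_subset ?_
  rintro _ ⟨p, q, hpq, rfl⟩
  refine ⟨_, subset_closure ⟨p, q, hpq, rfl⟩, ?_⟩
  rw [← smul_sub, smul_comm]

theorem of_lipBound_sub [CompleteSpace Y]
    (h : ∀ θ > 0, ∃ H : M → Y, IsLipCompact H ∧ LipBound (fun x => F x - H x) θ) :
    IsLipCompact F := by
  refine (TotallyBounded.closure ?_).isCompact_of_isClosed isClosed_closure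
  refine Metric.totallyBounded_iff.2 fun θ hθ => ?_
  obtain ⟨H, hH, hFH⟩ := h (θ / 2) (half_pos hθ)
  obtain ⟨t, -, ht, hcover⟩ :=
    Metric.finite_approx_of_totallyBounded hH.totallyBounded (θ / 2) (half_pos hθ)
  refine ⟨t, ht, ?_⟩
  rintro _ ⟨p, q, hpq, rfl⟩
  obtain ⟨c, hc, hdist⟩ := mem_iUnion₂.1 (hcover (subset_closure ⟨p, q, hpq, rfl⟩))
  have hd := dist_pos.2 hpq
  have hclose : dist ((dist p q)⁻¹ • (F p - F q)) ((dist p q)⁻¹ • (H p - H q)) ≤ θ / 2 := by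
    rw [dist_eq_norm, ← smul_sub, norm_smul, Real.norm_eq_abs, abs_of_pos (inv_pos.2 hd),
      inv_mul_le_iff₀ hd, mul_comm]
    simpa [sub_sub_sub_comm] using hFH p q
  refine mem_iUnion₂.2 ⟨c, hc, (dist_triangle _ ((dist p q)⁻¹ • (H p - H q)) _).trans_lt ?_⟩
  exact (add_lt_add_of_le_of_lt hclose (mem_ball.1 hdist)).trans_eq (add_halves θ)

end IsLipCompact

theorem isLipCompact_smul_const {a : M → ℝ} {C : ℝ} (ha : LipBound a C) (v : Y) :
    IsLipCompact (fun x => a x • v) := by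
  refine ((isCompact_Icc (a := -C) (b := C)).image (f := fun c : ℝ => c • v)
    (continuous_id.smul continuous_const)).closure_of_subset ?_
  rintro _ ⟨p, q, hpq, rfl⟩
  have hd := dist_pos.2 hpq
  refine ⟨(dist p q)⁻¹ * (a p - a q), abs_le.1 ?_, by rw [← sub_smul, smul_smul]⟩
  rw [abs_mul, abs_of_pos (inv_pos.2 hd), inv_mul_le_iff₀ hd, mul_comm]
  exact ha p q

end LipCompact

section Norming

variable {Y : Type*} [NormedAddCommGroup Y] [NormedSpace ℝ Y] {Γ : Set (Y →L[ℝ] ℝ)}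

theorem abs_apply_le_of_norm_le_one {φ : Y →L[ℝ] ℝ} (hφ : ‖φ‖ ≤ 1) {w : Y} {a : ℝ}
    (hw : ‖w‖ ≤ a) : |φ w| ≤ a :=
  (φ.le_opNorm w).trans ((mul_le_of_le_one_left (norm_nonneg w) hφ).trans hw)

namespace IsOneNorming

theorem norm_le (hΓ : IsOneNorming Γ) {y : Y} {C : ℝ} (hC : 0 ≤ C)
    (h : ∀ φ ∈ Γ, |φ y| ≤ C) : ‖y‖ ≤ C := by
  rw [hΓ.2 y]
  refine Real.sSup_le ?_ hC
  rintro _ ⟨φ, hφ, rfl⟩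
  exact h φ hφ

theorem exists_lt_abs (hΓ : IsOneNorming Γ) {y : Y} {c : ℝ} (hc : 0 ≤ c) (h : c < ‖y‖) :
    ∃ φ ∈ Γ, c < |φ y| := by
  by_contra! h'
  exact h.not_ge (hΓ.norm_le hc h')

end IsOneNorming

theorem isWeakStarOpen_iff {U : Set (Y →L[ℝ] ℝ)} :
    IsWeakStarOpen U ↔ IsOpen {ψ : WeakDual ℝ Y | StrongDual.toWeakDual.symm ψ ∈ U} := by
  rw [IsWeakStarOpen, LinearEquiv.image_eq_preimage_symm]
  rfl

theorem isWeakStarOpen_setOf_lt_abs (y : Y) (c : ℝ) :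
    IsWeakStarOpen {φ : Y →L[ℝ] ℝ | c < |φ y|} :=
  isWeakStarOpen_iff.2 <| isOpen_lt continuous_const (WeakDual.eval_continuous y).abs

theorem IsWeakStarOpen.inter {U W : Set (Y →L[ℝ] ℝ)} (hU : IsWeakStarOpen U)
    (hW : IsWeakStarOpen W) : IsWeakStarOpen (U ∩ W) :=
  isWeakStarOpen_iff.2 <| (isWeakStarOpen_iff.1 hU).inter (isWeakStarOpen_iff.1 hW)

theorem exists_isWeakStarOpen_abs_sub_le {K : Set Y} (hK : IsCompact K) (φ₀ : Y →L[ℝ] ℝ)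
    {δ : ℝ} (hδ : 0 < δ) :
    ∃ W, IsWeakStarOpen W ∧ φ₀ ∈ W ∧ ∀ φ ∈ W, ∀ ψ ∈ W, ‖φ‖ ≤ 1 → ‖ψ‖ ≤ 1 →
      ∀ u ∈ K, |φ u - ψ u| ≤ δ := by
  obtain ⟨t, -, ht, hcover⟩ :=
    Metric.finite_approx_of_totallyBounded hK.totallyBounded (δ / 4) (by positivity)
  refine ⟨{φ | ∀ v ∈ t, |φ v - φ₀ v| < δ / 4}, ?_,
    fun v _ => by rw [sub_self, abs_zero]; positivity, fun φ hφ ψ hψ hφ1 hψ1 u hu => ?_⟩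
  · refine isWeakStarOpen_iff.2 ?_
    have : {ψ : WeakDual ℝ Y | ∀ v ∈ t, |ψ v - φ₀ v| < δ / 4} =
        ⋂ v ∈ t, {ψ : WeakDual ℝ Y | |ψ v - φ₀ v| < δ / 4} := by
      ext; simp
    exact this ▸ ht.isOpen_biInter fun v _ =>
      isOpen_lt ((WeakDual.eval_continuous v).sub continuous_const).abs continuous_const
  obtain ⟨v, hv, huv⟩ := mem_iUnion₂.1 (hcover hu)
  have huv' : ‖u - v‖ ≤ δ / 4 := (mem_ball_iff_norm.1 huv).le
  have hφuv := abs_le.1 (abs_apply_le_of_norm_le_one hφ1 huv')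
  have hψuv := abs_le.1 (abs_apply_le_of_norm_le_one hψ1 huv')
  have hφv := abs_le.1 (hφ v hv).le
  have hψv := abs_le.1 (hψ v hv).le
  rw [map_sub] at hφuv hψuv
  rw [abs_le]
  constructor <;> linarith

end Norming

section ACK

variable {Y : Type*} [NormedAddCommGroup Y] [NormedSpace ℝ Y]

/-- The data `V, y₁, e, T` produced by ACK structure with parameters `ρ, ε` (with `T` the
operator called `F` in the definition). -/
structure ACKTriple (Γ : Set (Y →L[ℝ] ℝ)) (ρ ε : ℝ) (V : Set (Y →L[ℝ] ℝ))
    (y₁ : Y →L[ℝ] ℝ) (e : Y) (T : Y →L[ℝ] Y) : Prop where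
  norm_e : ‖e‖ = 1
  norm_T_le : ‖T‖ ≤ 1
  apply_T_e : y₁ (T e) = 1
  abs_apply_T_e_le : ∀ φ ∈ Γ, 1 < ‖φ.comp T‖ + (1 - ε) * ‖φ - φ.comp T‖ → |φ (T e)| ≤ ρ
  exists_approx : ∀ φ ∈ Γ, ∃ (n : ℕ) (v : Fin n → (Y →L[ℝ] ℝ)) (c : Fin n → ℝ),
    (∀ k, v k ∈ V) ∧ (∑ k, |c k|) ≤ 1 ∧ ‖φ.comp T - ∑ k, c k • v k‖ < ε
  abs_apply_e_sub_one_le : ∀ φ ∈ V, |φ e - 1| ≤ ε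

theorem ACKWith.exists_ackTriple {ρ : ℝ} {Γ : Set (Y →L[ℝ] ℝ)} (hΓ : ACKWith Y ρ Γ)
    {K : Set Y} (hK : IsCompact K) {y : Y} {c : ℝ} (hc : 0 ≤ c) (hy : c < ‖y‖)
    {ε δ : ℝ} (hε : 0 < ε) (hδ : 0 < δ) :
    ∃ V y₁ e T, ACKTriple Γ ρ ε V y₁ e T ∧ y₁ ∈ V ∧ V ⊆ Γ ∧ c < |y₁ y| ∧
      ∀ v ∈ V, ∀ u ∈ K, |v u - y₁ u| ≤ δ := by
  obtain ⟨φ₀, hφ₀Γ, hφ₀⟩ := hΓ.1.exists_lt_abs hc hy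
  obtain ⟨W, hWo, hφ₀W, hW⟩ := exists_isWeakStarOpen_abs_sub_le hK φ₀ hδ
  obtain ⟨V, hVU, -, y₁, hy₁, e, he, T, -, hT, hy₁T, -, hbad, happrox, hVe⟩ :=
    hΓ.2 ε hε (({φ | c < |φ y|} ∩ W) ∩ Γ) ⟨φ₀, ⟨hφ₀, hφ₀W⟩, hφ₀Γ⟩ inter_subset_right
      ⟨_, (isWeakStarOpen_setOf_lt_abs y c).inter hWo, rfl⟩
  have hnorm : ∀ v ∈ V, ‖v‖ ≤ 1 := fun v hv => hΓ.1.1 v (hVU hv).2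
  refine ⟨V, y₁, e, T, ⟨he, hT.le, hy₁T, fun φ hφ h => hbad φ hφ fun hmem => h.not_ge hmem.2,
    happrox, hVe⟩, hy₁, fun v hv => (hVU hv).2, (hVU hy₁).1.1, fun v hv u hu => ?_⟩
  exact hW v (hVU hv).1.2 y₁ (hVU hy₁).1.2 (hnorm v hv) (hnorm y₁ hy₁) u hu

theorem abs_sum_smul_apply_sub_le {n : ℕ} {v : Fin n → Y →L[ℝ] ℝ} {c : Fin n → ℝ}
    (hc : ∑ k, |c k| ≤ 1) {w : Y} {l κ : ℝ} (hκ : 0 ≤ κ) (hv : ∀ k, |v k w - l| ≤ κ) :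
    |(∑ k, c k • v k) w - (∑ k, c k) * l| ≤ κ := by
  have hsum : (∑ k, c k • v k) w - (∑ k, c k) * l = ∑ k, c k * (v k w - l) := by
    simp only [FunLike.coe_sum, Finset.sum_apply, FunLike.coe_smul,
      Pi.smul_apply, smul_eq_mul, Finset.sum_mul, mul_sub, Finset.sum_sub_distrib]
  rw [hsum]
  calc |∑ k, c k * (v k w - l)| ≤ ∑ k, |c k| * κ := by
        refine (Finset.abs_sum_le_sum_abs _ _).trans (Finset.sum_le_sum fun k _ => ?_)
        rw [abs_mul]
        exact mul_le_mul_of_nonneg_left (hv k) (abs_nonneg _)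
    _ = (∑ k, |c k|) * κ := Finset.sum_mul _ _ _ |>.symm
    _ ≤ κ := mul_le_of_le_one_left hκ hc

namespace ACKTriple

variable {Γ V : Set (Y →L[ℝ] ℝ)} {ρ ε : ℝ} {y₁ : Y →L[ℝ] ℝ} {e : Y} {T : Y →L[ℝ] Y}

/-- `φ` lies in the set `V₁` of the ACK definition. Split `φ = (φ - φ ∘ T) + φ ∘ T`: the
constraint defining `V₁` pays for the first part, and `φ ∘ T` is close to a combination of
elements of `V`, which nearly agree with `l` on `u` and with `1` at `e`. -/
theorem abs_apply_add_smul_le_of_le_one (hA : ACKTriple Γ ρ ε V y₁ e T) (hε : 0 < ε)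
    {φ : Y →L[ℝ] ℝ} (hφΓ : φ ∈ Γ) (hφ : ‖φ‖ ≤ 1)
    (hV₁ : ‖φ.comp T‖ + (1 - ε) * ‖φ - φ.comp T‖ ≤ 1) {u : Y} {l α d t δ : ℝ}
    (hu : ‖u‖ ≤ d) (hδ : 0 ≤ δ) (hVu : ∀ v ∈ V, |v u - l| ≤ δ * d)
    (hsum : |l + α| ≤ (1 + t) * d) (hα : |α| ≤ 2 * d) (ht0 : 0 ≤ t) (ht1 : t ≤ 1) :
    |φ (u + α • T e)| ≤ (1 + t + 13 * ε + δ) * d := by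
  obtain ⟨n, v, c, hvV, hc, happrox⟩ := hA.exists_approx φ hφΓ
  set ψ := ∑ k, c k • v k
  set P := ‖φ - φ.comp T‖
  set Q := ‖φ.comp T‖
  have hd : 0 ≤ d := (norm_nonneg u).trans hu
  have hQ : Q ≤ 1 := (φ.opNorm_comp_le T).trans (mul_le_one₀ hφ (norm_nonneg T) hA.norm_T_le)
  have hP : P ≤ 2 := (norm_sub_le _ _).trans (by linarith)
  have hP0 : 0 ≤ P := norm_nonneg _
  have hw : ‖u + α • e‖ ≤ 3 * d := by
    refine (norm_add_le _ _).trans ?_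
    rw [norm_smul, hA.norm_e, mul_one, Real.norm_eq_abs]
    linarith
  have h₁ : |(φ - φ.comp T) u| ≤ P * d :=
    ((φ - φ.comp T).le_opNorm u).trans (mul_le_mul_of_nonneg_left hu hP0)
  have h₂ : |(φ.comp T - ψ) (u + α • e)| ≤ ε * (3 * d) :=
    ((φ.comp T - ψ).le_opNorm _).trans (mul_le_mul happrox.le hw (norm_nonneg _) hε.le)
  have h₃ : |ψ (u + α • e) - (∑ k, c k) * (l + α)| ≤ δ * d + 2 * d * ε := by
    refine abs_sum_smul_apply_sub_le hc (by positivity) fun k => ?_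
    have hve := hA.abs_apply_e_sub_one_le (v k) (hvV k)
    have hvu := hVu (v k) (hvV k)
    calc |v k (u + α • e) - (l + α)| = |(v k u - l) + α * (v k e - 1)| := by
          rw [map_add, map_smul, smul_eq_mul]; ring_nf
      _ ≤ |v k u - l| + |α| * |v k e - 1| := (abs_add_le _ _).trans_eq (by rw [abs_mul])
      _ ≤ δ * d + 2 * d * ε := add_le_add hvu (mul_le_mul hα hve (abs_nonneg _) (by positivity))
  have h₄ : |∑ k, c k| ≤ Q + 2 * ε := by
    have hψe := abs_sum_smul_apply_sub_le hc hε.le fun k => hA.abs_apply_e_sub_one_le _ (hvV k)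
    have hφψ : |(φ.comp T - ψ) e| ≤ ε :=
      ((φ.comp T - ψ).le_opNorm e).trans (by rw [hA.norm_e, mul_one]; exact happrox.le)
    have hφe : |(φ.comp T) e| ≤ Q := ((φ.comp T).le_opNorm e).trans_eq (by rw [hA.norm_e, mul_one])
    rw [mul_one] at hψe
    rw [sub_apply] at hφψ
    rw [abs_le] at *
    constructor <;> linarith
  have hsplit : φ (u + α • T e) = (φ - φ.comp T) u + (φ.comp T - ψ) (u + α • e) +
      (ψ (u + α • e) - (∑ k, c k) * (l + α)) + (∑ k, c k) * (l + α) := by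
    simp only [sub_apply, ContinuousLinearMap.comp_apply, map_add, map_smul,
      smul_eq_mul]
    ring
  have h₅ : |(∑ k, c k) * (l + α)| ≤ (Q + 2 * ε) * ((1 + t) * d) := by
    rw [abs_mul]; exact mul_le_mul h₄ hsum (abs_nonneg _) (by positivity)
  have hcoef : P + 3 * ε + (δ + 2 * ε) + (Q + 2 * ε) * (1 + t) ≤ 1 + t + 13 * ε + δ := by
    nlinarith [mul_nonneg hP0 ht0, mul_nonneg hε.le hP0, mul_nonneg hε.le ht0]
  rw [hsplit]
  calc _ ≤ |(φ - φ.comp T) u| + |(φ.comp T - ψ) (u + α • e)| +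
        |ψ (u + α • e) - (∑ k, c k) * (l + α)| + |(∑ k, c k) * (l + α)| :=
          (abs_add_le _ _).trans (add_le_add_left ((abs_add_le _ _).trans
            (add_le_add_left (abs_add_le _ _) _)) _)
    _ ≤ (P + 3 * ε + (δ + 2 * ε) + (Q + 2 * ε) * (1 + t)) * d := by nlinarith
    _ ≤ (1 + t + 13 * ε + δ) * d := mul_le_mul_of_nonneg_right hcoef hd

theorem norm_add_smul_le (hΓ : IsOneNorming Γ) (hA : ACKTriple Γ ρ ε V y₁ e T) (hε : 0 < ε)
    {u : Y} {l α d t δ : ℝ} (hu : ‖u‖ ≤ d) (hδ : 0 ≤ δ) (hVu : ∀ v ∈ V, |v u - l| ≤ δ * d)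
    (hsum : |l + α| ≤ (1 + t) * d) (hα : |α| ≤ 2 * d) (hαρ : |α| * ρ ≤ t * d)
    (ht0 : 0 ≤ t) (ht1 : t ≤ 1) :
    ‖u + α • T e‖ ≤ (1 + t + 13 * ε + δ) * d := by
  have hd : 0 ≤ d := (norm_nonneg u).trans hu
  refine hΓ.norm_le (by positivity) fun φ hφΓ => ?_
  have hφ := hΓ.1 φ hφΓ
  by_cases hV₁ : ‖φ.comp T‖ + (1 - ε) * ‖φ - φ.comp T‖ ≤ 1
  · exact hA.abs_apply_add_smul_le_of_le_one hε hφΓ hφ hV₁ hu hδ hVu hsum hα ht0 ht1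
  have hρ := hA.abs_apply_T_e_le φ hφΓ (not_le.1 hV₁)
  calc |φ (u + α • T e)| ≤ |φ u| + |α| * |φ (T e)| := by
        rw [map_add, map_smul, smul_eq_mul, ← abs_mul]; exact abs_add_le _ _
    _ ≤ d + |α| * ρ :=
        add_le_add (abs_apply_le_of_norm_le_one hφ hu) (mul_le_mul_of_nonneg_left hρ (abs_nonneg _))
    _ ≤ (1 + t + 13 * ε + δ) * d := by nlinarith

end ACKTriple

end ACK

section Step

variable {M Y : Type*} [MetricSpace M] [NormedAddCommGroup Y] [NormedSpace ℝ Y]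

theorem LipBPBWith.exists_near_of_lipBound_one {z : M} {η : ℝ → ℝ} (hη : LipBPBWith M z Y η)
    {F : M → Y} (hF0 : F z = 0) (hF : LipBound F 1) {p q : M} (hpq : p ≠ q) {ε D : ℝ}
    (hε : 0 < ε) (hDη : D ≤ η ε) (hD1 : D < 1) (hFpq : (1 - D) * dist p q < ‖F p - F q‖) :
    ∃ G : M → Y, G z = 0 ∧ LipBound G 1 ∧ ∃ r s, r ≠ s ∧ ‖G r - G s‖ = dist r s ∧
      LipBound (fun x => G x - F x) (ε + D) ∧ dist p r + dist q s < ε * dist p q := by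
  have hd := dist_pos.2 hpq
  set L := lipNorm F
  have hL : 1 - D < L := ((lt_div_iff₀ hd).2 hFpq).trans_le (hF.norm_div_le_lipNorm hpq)
  have hL1 : L ≤ 1 := hF.lipNorm_le zero_le_one
  have hL0 : 0 < L := by linarith
  have hFpq' : ‖L⁻¹ • F p - L⁻¹ • F q‖ > (1 - η ε) * dist p q := by
    rw [← smul_sub, norm_smul, Real.norm_eq_abs, abs_of_pos (inv_pos.2 hL0)]
    have : ‖F p - F q‖ ≤ L⁻¹ * ‖F p - F q‖ :=
      le_mul_of_one_le_left (norm_nonneg _) ((one_le_inv₀ hL0).2 hL1)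
    nlinarith
  obtain ⟨G, hG0, r, s, hrs, hGrs, hG1, hGF, hdrift⟩ :=
    hη.2 ε hε (fun x => L⁻¹ • F x) ((hF.const_smul _).isLip0 (by simp [hF0]))
      (by rw [lipNorm_const_smul, abs_of_pos (inv_pos.2 hL0), inv_mul_cancel₀ hL0.ne'])
      p q hpq hFpq'
  have hG : LipBound G 1 := hG1 ▸ hG0.lipBound_lipNorm
  refine ⟨G, hG0.2, hG, r, s, hrs, hGrs, ?_, (div_lt_iff₀ hd).1 hdrift⟩
  have hGF' : LipBound (fun x => G x - L⁻¹ • F x) ε :=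
    (hG.sub (hF.const_smul _)).lipBound_lipNorm.mono hGF.le
  have hscale : LipBound (fun x => (L⁻¹ - 1) • F x) D := by
    refine (hF.lipBound_lipNorm.const_smul _).mono ?_
    rw [abs_of_nonneg (sub_nonneg.2 ((one_le_inv₀ hL0).2 hL1)), sub_mul,
      inv_mul_cancel₀ hL0.ne', one_mul]
    linarith
  convert hGF'.add hscale using 2 with x
  rw [sub_smul, one_smul]
  abel

theorem exists_smul_lipNorm_eq_one {G₀ : M → Y} {K W : ℝ} {r s : M} (hK : 1 ≤ K) (hW : 0 < W)
    (hG₀ : LipBound G₀ (K + W / 2)) (hrs : r ≠ s) (hlow : K * dist r s ≤ ‖G₀ r - G₀ s‖) :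
    ∃ c : ℝ, lipNorm (fun x => c • G₀ x) = 1 ∧ (1 - W) * dist r s < ‖c • G₀ r - c • G₀ s‖ ∧
      LipBound (fun x => c • G₀ x - G₀ x) (K - 1 + W / 2) := by
  set N := lipNorm G₀
  have hd := dist_pos.2 hrs
  have hKN : K ≤ N := ((le_div_iff₀ hd).2 hlow).trans (hG₀.norm_div_le_lipNorm hrs)
  have hNK : N ≤ K + W / 2 := hG₀.lipNorm_le (by linarith)
  have hN0 : 0 < N := by linarith
  refine ⟨N⁻¹, ?_, ?_, ?_⟩
  · rw [lipNorm_const_smul, abs_of_pos (inv_pos.2 hN0), inv_mul_cancel₀ hN0.ne']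
  · rw [← smul_sub, norm_smul, Real.norm_eq_abs, abs_of_pos (inv_pos.2 hN0), lt_inv_mul_iff₀ hN0]
    have : (1 - W) * N < K := by nlinarith
    nlinarith
  · have hscale := hG₀.lipBound_lipNorm.const_smul (N⁻¹ - 1)
    rw [abs_of_nonpos (sub_nonpos.2 (inv_le_one_of_one_le₀ (by linarith))), neg_sub, sub_mul,
      inv_mul_cancel₀ hN0.ne', one_mul] at hscale
    convert hscale.mono (by linarith : N - 1 ≤ K - 1 + W / 2) using 2 with x
    rw [sub_smul, one_smul]

namespace ACKTriple

variable {Γ V : Set (Y →L[ℝ] ℝ)} {ρ ε : ℝ} {y₁ : Y →L[ℝ] ℝ} {e : Y} {T : Y →L[ℝ] Y}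

theorem lipBound_add_smul (hΓ : IsOneNorming Γ) (hA : ACKTriple Γ ρ ε V y₁ e T) (hε : 0 < ε)
    (hρ : 0 ≤ ρ) {F : M → Y} {g : M → ℝ} {t b δ : ℝ} (hF : LipBound F 1) (hδ : 0 ≤ δ)
    (hflat : ∀ v ∈ V, ∀ x y, |v (F x - F y) - y₁ (F x - F y)| ≤ δ * dist x y)
    (hg : LipBound g 1) (ha : LipBound (fun x => (1 + t) * g x - y₁ (F x)) b) (hb : b ≤ 2)
    (hbρ : b * ρ ≤ t) (ht0 : 0 ≤ t) (ht1 : t ≤ 1) :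
    LipBound (fun x => F x + ((1 + t) * g x - y₁ (F x)) • T e) (1 + t + 13 * ε + δ) := by
  intro x y
  set a := fun x => (1 + t) * g x - y₁ (F x)
  have hα : |a x - a y| ≤ b * dist x y := ha x y
  have hd := dist_nonneg (x := x) (y := y)
  rw [add_sub_add_comm, ← sub_smul]
  refine hA.norm_add_smul_le hΓ hε (by simpa using hF x y) hδ (fun v hv => hflat v hv x y)
    ?_ (by nlinarith) (by nlinarith) ht0 ht1
  have hsum : y₁ (F x - F y) + (a x - a y) = (1 + t) * (g x - g y) := by
    simp only [a, map_sub]; ring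
  rw [hsum, abs_mul, abs_of_nonneg (by linarith)]
  exact mul_le_mul_of_nonneg_left (by simpa using hg x y) (by linarith)

/-- `G` is `F + ((1 + t) g - y₁ ∘ F) • T e` renormalised, with `t = ρ b / (1 - ρ)`, so that
`ρ (b + t) = t`: the functionals outside `V₁`, where `|φ (T e)| ≤ ρ`, then see a norm of at most
`1 + t`, which `y₁` attains at `(r, s)`. -/
theorem exists_nearly_attaining (hΓ : IsOneNorming Γ) {W : ℝ} (hW : 0 < W)
    (hA : ACKTriple Γ ρ (W / 52) V y₁ e T) (hρ0 : 0 ≤ ρ) (hρ1 : ρ < 1) (hy₁ : ‖y₁‖ ≤ 1)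
    {z : M} {F : M → Y} (hF0 : F z = 0) (hF : LipBound F 1) (hFc : IsLipCompact F)
    (hflat : ∀ v ∈ V, ∀ x y, |v (F x - F y) - y₁ (F x - F y)| ≤ W / 4 * dist x y)
    {g : M → ℝ} (hg0 : g z = 0) (hg : LipBound g 1) {r s : M} (hrs : r ≠ s)
    (hgrs : ‖g r - g s‖ = dist r s) {b : ℝ} (hgf : LipBound (fun x => g x - y₁ (F x)) b)
    (hb0 : 0 ≤ b) (hb : b ≤ (1 - ρ) / 2) :
    ∃ G : M → Y, IsLip0 z G ∧ IsLipCompact G ∧ lipNorm G = 1 ∧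
      (1 - W) * dist r s < ‖G r - G s‖ ∧
      LipBound (fun x => G x - F x) (2 * b / (1 - ρ) + W / 2) := by
  have h1ρ : 0 < 1 - ρ := by linarith
  set t := ρ * b / (1 - ρ)
  have ht : t * (1 - ρ) = ρ * b := div_mul_cancel₀ _ h1ρ.ne'
  have ht0 : 0 ≤ t := by positivity
  have ht1 : t ≤ 1 / 2 := by nlinarith
  set a := fun x => (1 + t) * g x - y₁ (F x)
  have ha : LipBound a (b + t) := by
    convert (hgf.add (hg.const_smul t)).mono (le_of_eq (by rw [abs_of_nonneg ht0, mul_one]))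
      using 2 with x
    simp only [a, smul_eq_mul]; ring
  set G₀ := fun x => F x + a x • T e
  have hG₀ : LipBound G₀ (1 + t + W / 2) :=
    (hA.lipBound_add_smul hΓ (by positivity) hρ0 hF (by positivity) hflat hg ha (by linarith)
      (by nlinarith) ht0 (by linarith)).mono (by linarith)
  have hlow : (1 + t) * dist r s ≤ ‖G₀ r - G₀ s‖ := by
    have hy₁G₀ : y₁ (G₀ r - G₀ s) = (1 + t) * (g r - g s) := by
      simp only [G₀, a, map_sub, map_add, map_smul, smul_eq_mul, hA.apply_T_e]; ring
    calc (1 + t) * dist r s = |y₁ (G₀ r - G₀ s)| := by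
          rw [hy₁G₀, abs_mul, abs_of_pos (by linarith), ← Real.norm_eq_abs, hgrs]
      _ ≤ ‖G₀ r - G₀ s‖ := abs_apply_le_of_norm_le_one hy₁ le_rfl
  obtain ⟨c, hc1, hcrs, hcG₀⟩ := exists_smul_lipNorm_eq_one (by linarith) hW hG₀ hrs hlow
  have hTe : ‖T e‖ ≤ 1 := (T.le_opNorm e).trans (by rw [hA.norm_e, mul_one]; exact hA.norm_T_le)
  refine ⟨fun x => c • G₀ x, (hG₀.const_smul c).isLip0 (by simp [G₀, a, hF0, hg0]),
    (hFc.add (isLipCompact_smul_const ha _)).const_smul c, hc1, hcrs, ?_⟩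
  have hbound : 1 + t - 1 + W / 2 + (b + t) * ‖T e‖ ≤ 2 * b / (1 - ρ) + W / 2 := by
    have : 2 * t + b ≤ 2 * b / (1 - ρ) := by rw [le_div_iff₀ h1ρ]; nlinarith
    nlinarith
  convert (hcG₀.add (ha.smul_const (T e))).mono hbound using 2 with x
  simp only [G₀]; abel

end ACKTriple

theorem exists_step {z : M} {η : ℝ → ℝ} {ρ : ℝ} {Γ : Set (Y →L[ℝ] ℝ)} (hΓ : ACKWith Y ρ Γ)
    (hη : LipBPBWith M z ℝ η) (hρ0 : 0 ≤ ρ) (hρ1 : ρ < 1) {F : M → Y} (hF0 : IsLip0 z F)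
    (hFc : IsLipCompact F) (hF1 : lipNorm F = 1) {p q : M} (hpq : p ≠ q) {ε D W : ℝ}
    (hε : 0 < ε) (hερ : ε ≤ (1 - ρ) / 4) (hD0 : 0 ≤ D) (hDε : D ≤ ε) (hDη : D ≤ η ε)
    (hW : 0 < W) (hFpq : (1 - D) * dist p q < ‖F p - F q‖) :
    ∃ G : M → Y, IsLip0 z G ∧ IsLipCompact G ∧ lipNorm G = 1 ∧ ∃ r s, r ≠ s ∧
      (1 - W) * dist r s < ‖G r - G s‖ ∧ LipBound (fun x => G x - F x) (4 * ε / (1 - ρ) + W / 2) ∧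
      dist p r + dist q s ≤ ε * dist p q := by
  have hF : LipBound F 1 := hF1 ▸ hF0.lipBound_lipNorm
  have hd := dist_pos.2 hpq
  obtain ⟨V, y₁, e, T, hA, hy₁V, hVΓ, hy₁pq, hflat⟩ :=
    hΓ.exists_ackTriple hFc (by nlinarith) hFpq (ε := W / 52) (δ := W / 4) (by positivity)
      (by positivity)
  have hy₁ : ‖y₁‖ ≤ 1 := hΓ.1.1 y₁ (hVΓ hy₁V)
  obtain ⟨g, hg0, hg, r, s, hrs, hgrs, hgf, hdrift⟩ :=
    hη.exists_near_of_lipBound_one (F := fun x => y₁ (F x)) (by simp [hF0.2])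
      ((hF.clm_comp y₁).mono (by simpa using hy₁)) hpq hε hDη (by linarith)
      (by rw [Real.norm_eq_abs, ← map_sub]; exact hy₁pq)
  obtain ⟨G, hG0, hGc, hG1, hGrs, hGF⟩ :=
    hA.exists_nearly_attaining hΓ.1 hW hρ0 hρ1 hy₁ hF0.2 hF hFc
      (fun v hv => abs_apply_sub_le_of_forall_slopes fun u hu => hflat v hv u (subset_closure hu))
      hg0 hg hrs hgrs hgf (by linarith) (by linarith)
  refine ⟨G, hG0, hGc, hG1, r, s, hrs, hGrs, hGF.mono ?_, hdrift.le⟩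
  exact add_le_add_left (div_le_div_of_nonneg_right (by linarith) (by linarith)) _

end Step

theorem exists_seq_of_step {α : Type*} {P : ℕ → α → Prop} {R : ℕ → α → α → Prop} {x₀ : α}
    (h₀ : P 0 x₀) (h : ∀ n x, P n x → ∃ y, P (n + 1) y ∧ R n x y) :
    ∃ f : ℕ → α, f 0 = x₀ ∧ ∀ n, P n (f n) ∧ R n (f n) (f (n + 1)) := by
  choose! next hnext using h
  let f : ℕ → α := fun n => Nat.rec (motive := fun _ => α) x₀ next n
  have hP : ∀ n, P n (f n) := fun n => by
    induction n with
    | zero => exact h₀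
    | succ n ih => exact (hnext n _ ih).1
  exact ⟨f, rfl, fun n => ⟨hP n, (hnext n _ (hP n)).2⟩⟩

theorem tendsto_div_two_pow (C : ℝ) : Tendsto (fun n : ℕ => C / 2 ^ n) atTop (𝓝 0) := by
  simpa [div_eq_mul_inv] using
    (tendsto_pow_atTop_nhds_zero_of_lt_one (by norm_num : (0 : ℝ) ≤ 1 / 2)
      (by norm_num)).const_mul C

section Limits

variable {M Y : Type*} [MetricSpace M] [NormedAddCommGroup Y]

theorem dist_add_dist_le_of_drift {ps qs : ℕ → M} {E : ℝ} (hE0 : 0 ≤ E) (hE : 4 * E ≤ 1)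
    (h : ∀ n, dist (ps n) (ps (n + 1)) + dist (qs n) (qs (n + 1)) ≤
      E / 2 ^ n * dist (ps n) (qs n)) (n : ℕ) :
    dist (ps 0) (ps n) + dist (qs 0) (qs n) ≤ 4 * E * dist (ps 0) (qs 0) * (1 - 1 / 2 ^ n) := by
  set d := dist (ps 0) (qs 0)
  induction n with
  | zero => simp
  | succ n ih =>
    have hpow : (1 : ℝ) ≤ 2 ^ n := one_le_pow₀ one_le_two
    have hfac : 0 ≤ 1 - 1 / (2 : ℝ) ^ n := by
      rw [sub_nonneg, div_le_one (by positivity)]; exact hpow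
    have hA : dist (ps n) (qs n) ≤ 2 * d := by
      have := dist_triangle4 (ps n) (ps 0) (qs 0) (qs n)
      rw [dist_comm (ps n) (ps 0)] at this
      have : 4 * E * d * (1 - 1 / 2 ^ n) ≤ 1 * d * 1 :=
        mul_le_mul (mul_le_mul_of_nonneg_right hE dist_nonneg) (sub_le_self _ (by positivity))
          hfac (by positivity)
      linarith
    have hstep := (h n).trans (mul_le_mul_of_nonneg_left hA (by positivity))
    have := dist_triangle (ps 0) (ps n) (ps (n + 1))
    have := dist_triangle (qs 0) (qs n) (qs (n + 1))
    calc _ ≤ 4 * E * d * (1 - 1 / 2 ^ n) + E / 2 ^ n * (2 * d) := by linarith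
      _ = 4 * E * d * (1 - 1 / 2 ^ (n + 1)) := by rw [pow_succ]; field_simp; ring

theorem exists_tendsto_of_drift [CompleteSpace M] {ps qs : ℕ → M} {E : ℝ} (hE0 : 0 ≤ E)
    (hE : 4 * E < 1) (hpq : ps 0 ≠ qs 0)
    (h : ∀ n, dist (ps n) (ps (n + 1)) + dist (qs n) (qs (n + 1)) ≤
      E / 2 ^ n * dist (ps n) (qs n)) :
    ∃ r s, Tendsto ps atTop (𝓝 r) ∧ Tendsto qs atTop (𝓝 s) ∧ r ≠ s ∧
      dist (ps 0) r + dist (qs 0) s ≤ 4 * E * dist (ps 0) (qs 0) := by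
  set d := dist (ps 0) (qs 0)
  have hd := dist_pos.2 hpq
  have hS : ∀ n, dist (ps 0) (ps n) + dist (qs 0) (qs n) ≤ 4 * E * d := fun n =>
    (dist_add_dist_le_of_drift hE0 hE.le h n).trans
      (mul_le_of_le_one_right (by positivity) (sub_le_self _ (by positivity)))
  have hA : ∀ n, E / 2 ^ n * dist (ps n) (qs n) ≤ 4 * E * d / 2 / 2 ^ n := fun n => by
    have := dist_triangle4 (ps n) (ps 0) (qs 0) (qs n)
    rw [dist_comm (ps n) (ps 0)] at this
    have hA : dist (ps n) (qs n) ≤ 2 * d := by nlinarith [hS n]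
    calc E / 2 ^ n * dist (ps n) (qs n) ≤ E / 2 ^ n * (2 * d) :=
          mul_le_mul_of_nonneg_left hA (by positivity)
      _ = 4 * E * d / 2 / 2 ^ n := by ring
  obtain ⟨r, hr⟩ := cauchySeq_tendsto_of_complete <| cauchySeq_of_le_geometric_two fun n =>
    ((le_add_of_nonneg_right dist_nonneg).trans (h n)).trans (hA n)
  obtain ⟨s, hs⟩ := cauchySeq_tendsto_of_complete <| cauchySeq_of_le_geometric_two fun n =>
    ((le_add_of_nonneg_left dist_nonneg).trans (h n)).trans (hA n)
  have hrs : dist (ps 0) r + dist (qs 0) s ≤ 4 * E * d :=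
    le_of_tendsto' ((tendsto_const_nhds.dist hr).add (tendsto_const_nhds.dist hs)) hS
  refine ⟨r, s, hr, hs, fun hrs' => ?_, hrs⟩
  subst hrs'
  have := dist_triangle (ps 0) r (qs 0)
  rw [dist_comm r] at this
  nlinarith

theorem exists_lipBound_sub_of_geometric [CompleteSpace Y] {z : M} {Gs : ℕ → M → Y} {B : ℝ}
    (hz : ∀ n, Gs n z = 0) (h : ∀ n, LipBound (fun x => Gs (n + 1) x - Gs n x) (B / 2 ^ n)) :
    ∃ G : M → Y, G z = 0 ∧ ∀ n, LipBound (fun x => G x - Gs n x) (2 * B / 2 ^ n) := by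
  have hstep : ∀ x y n, dist (Gs n x - Gs n y) (Gs (n + 1) x - Gs (n + 1) y) ≤
      2 * B * dist x y / 2 / 2 ^ n := by
    intro x y n
    rw [dist_comm, dist_eq_norm, sub_sub_sub_comm]
    exact (h n x y).trans_eq (by ring)
  have hlim : ∀ x, ∃ l, Tendsto (fun n => Gs n x) atTop (𝓝 l) := fun x =>
    cauchySeq_tendsto_of_complete <| cauchySeq_of_le_geometric_two fun n => by
      simpa only [hz, sub_zero] using hstep x z n
  choose G hG using hlim
  refine ⟨G, tendsto_nhds_unique (hG z) (by simp [hz]), fun n x y => ?_⟩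
  have := dist_le_of_le_geometric_two_of_tendsto (hstep x y) ((hG x).sub (hG y)) n
  rw [dist_comm, dist_eq_norm, sub_sub_sub_comm] at this
  exact this.trans_eq (by ring)

theorem dist_le_norm_sub_of_tendsto {G : M → Y} {Gs : ℕ → M → Y} {ps qs : ℕ → M}
    {c D : ℕ → ℝ} {r s : M} (hG : Continuous G)
    (hGs : ∀ n, LipBound (fun x => G x - Gs n x) (c n)) (hc : Tendsto c atTop (𝓝 0))
    (hD : Tendsto D atTop (𝓝 0)) (hr : Tendsto ps atTop (𝓝 r)) (hs : Tendsto qs atTop (𝓝 s))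
    (hatt : ∀ n, (1 - D n) * dist (ps n) (qs n) < ‖Gs n (ps n) - Gs n (qs n)‖) :
    dist r s ≤ ‖G r - G s‖ := by
  have hle : ∀ n, (1 - D n - c n) * dist (ps n) (qs n) ≤ ‖G (ps n) - G (qs n)‖ := fun n => by
    have h₁ := hGs n (ps n) (qs n)
    have h₂ := norm_sub_norm_le (Gs n (ps n) - Gs n (qs n)) (G (ps n) - G (qs n))
    have h₃ : Gs n (ps n) - Gs n (qs n) - (G (ps n) - G (qs n)) =
        -(G (ps n) - Gs n (ps n) - (G (qs n) - Gs n (qs n))) := by abel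
    rw [h₃, norm_neg] at h₂
    nlinarith [hatt n]
  refine le_of_tendsto_of_tendsto' (b := atTop) ?_ ?_ hle
  · have h1 : Tendsto (fun _ : ℕ => (1 : ℝ)) atTop (𝓝 1) := tendsto_const_nhds
    simpa using ((h1.sub hD).sub hc).mul (hr.dist hs)
  · exact (((hG.tendsto r).comp hr).sub ((hG.tendsto s).comp hs)).norm

variable [NormedSpace ℝ Y] [CompleteSpace Y]

theorem exists_attaining_of_seq [CompleteSpace M] {z : M} {Gs : ℕ → M → Y} {ps qs : ℕ → M}
    {D : ℕ → ℝ} {B E : ℝ}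
    (hGs : ∀ n, IsLip0 z (Gs n) ∧ IsLipCompact (Gs n) ∧ lipNorm (Gs n) = 1 ∧ ps n ≠ qs n ∧
      (1 - D n) * dist (ps n) (qs n) < ‖Gs n (ps n) - Gs n (qs n)‖)
    (hD : Tendsto D atTop (𝓝 0))
    (hclose : ∀ n, LipBound (fun x => Gs (n + 1) x - Gs n x) (B / 2 ^ n))
    (hdrift : ∀ n, dist (ps n) (ps (n + 1)) + dist (qs n) (qs (n + 1)) ≤
      E / 2 ^ n * dist (ps n) (qs n))
    (hE0 : 0 ≤ E) (hE : 4 * E < 1) :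
    ∃ G : M → Y, IsLip0 z G ∧ IsLipCompact G ∧ ∃ r s, r ≠ s ∧ ‖G r - G s‖ = dist r s ∧
      lipNorm G = 1 ∧ LipBound (fun x => G x - Gs 0 x) (2 * B) ∧
      dist (ps 0) r + dist (qs 0) s ≤ 4 * E * dist (ps 0) (qs 0) := by
  obtain ⟨G, hGz, hG⟩ := exists_lipBound_sub_of_geometric (fun n => (hGs n).1.2) hclose
  obtain ⟨r, s, hr, hs, hrs, hdist⟩ := exists_tendsto_of_drift hE0 hE (hGs 0).2.2.2.1 hdrift
  have hc := tendsto_div_two_pow (2 * B)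
  have hG1 : LipBound G 1 := lipBound_of_tendsto_lipBound_sub
    (fun n => (hGs n).2.2.1 ▸ (hGs n).1.lipBound_lipNorm) hG hc
  have hGrs : ‖G r - G s‖ = dist r s := le_antisymm ((hG1 r s).trans_eq (one_mul _))
    (dist_le_norm_sub_of_tendsto hG1.continuous hG hc hD hr hs fun n => (hGs n).2.2.2.2)
  refine ⟨G, hG1.isLip0 hGz, IsLipCompact.of_lipBound_sub fun θ hθ => ?_, r, s, hrs, hGrs,
    hG1.lipNorm_eq hrs (by rw [one_mul, hGrs]), by simpa using hG 0, hdist⟩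
  obtain ⟨n, hn⟩ := (hc.eventually (gt_mem_nhds hθ)).exists
  exact ⟨Gs n, (hGs n).2.1, (hG n).mono hn.le⟩

end Limits

theorem exists_seq_nearly_attaining {M Y : Type*} [MetricSpace M] [NormedAddCommGroup Y]
    [NormedSpace ℝ Y] {z : M} {η : ℝ → ℝ} {ρ : ℝ} {Γ : Set (Y →L[ℝ] ℝ)} (hΓ : ACKWith Y ρ Γ)
    (hη : LipBPBWith M z ℝ η) (hρ0 : 0 ≤ ρ) (hρ1 : ρ < 1) {E : ℝ} (hE : 0 < E)
    (hEρ : E ≤ (1 - ρ) / 4) {D : ℕ → ℝ} (hD0 : ∀ n, 0 < D n) (hDE : ∀ n, D n ≤ E / 2 ^ n)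
    (hDη : ∀ n, D n ≤ η (E / 2 ^ n)) {F : M → Y} (hF0 : IsLip0 z F) (hFc : IsLipCompact F)
    (hF1 : lipNorm F = 1) {p q : M} (hpq : p ≠ q)
    (hFpq : (1 - D 0) * dist p q < ‖F p - F q‖) :
    ∃ (Gs : ℕ → M → Y) (ps qs : ℕ → M), Gs 0 = F ∧ ps 0 = p ∧ qs 0 = q ∧
      (∀ n, IsLip0 z (Gs n) ∧ IsLipCompact (Gs n) ∧ lipNorm (Gs n) = 1 ∧ ps n ≠ qs n ∧
        (1 - D n) * dist (ps n) (qs n) < ‖Gs n (ps n) - Gs n (qs n)‖) ∧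
      (∀ n, LipBound (fun x => Gs (n + 1) x - Gs n x) (5 * E / (1 - ρ) / 2 ^ n)) ∧
      (∀ n, dist (ps n) (ps (n + 1)) + dist (qs n) (qs (n + 1)) ≤
        E / 2 ^ n * dist (ps n) (qs n)) := by
  have h1ρ : 0 < 1 - ρ := by linarith
  obtain ⟨X, hX0, hX⟩ := exists_seq_of_step (x₀ := (F, p, q))
    (P := fun n (X : (M → Y) × M × M) => IsLip0 z X.1 ∧ IsLipCompact X.1 ∧ lipNorm X.1 = 1 ∧
      X.2.1 ≠ X.2.2 ∧ (1 - D n) * dist X.2.1 X.2.2 < ‖X.1 X.2.1 - X.1 X.2.2‖)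
    (R := fun n (X X' : (M → Y) × M × M) =>
      LipBound (fun x => X'.1 x - X.1 x) (5 * E / (1 - ρ) / 2 ^ n) ∧
      dist X.2.1 X'.2.1 + dist X.2.2 X'.2.2 ≤ E / 2 ^ n * dist X.2.1 X.2.2)
    ⟨hF0, hFc, hF1, hpq, hFpq⟩ fun n X ⟨hG0, hGc, hG1, hrs, hGrs⟩ => by
      have hEn : E / 2 ^ n ≤ E := div_le_self hE.le (one_le_pow₀ one_le_two)
      obtain ⟨G, hG0', hGc', hG1', r, s, hrs', hGrs', hclose, hdrift⟩ :=
        exists_step hΓ hη hρ0 hρ1 hG0 hGc hG1 hrs (by positivity) (hEn.trans hEρ) (hD0 n).le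
          (hDE n) (hDη n) (hD0 (n + 1)) hGrs
      refine ⟨(G, r, s), ⟨hG0', hGc', hG1', hrs', hGrs'⟩, hclose.mono ?_, hdrift⟩
      have hD : D (n + 1) ≤ E / 2 ^ n / 2 := (hDE (n + 1)).trans_eq (by rw [pow_succ]; ring)
      have hE' : E / 2 ^ n ≤ E / 2 ^ n / (1 - ρ) := le_div_self (by positivity) h1ρ (by linarith)
      have : 0 ≤ E / 2 ^ n := by positivity
      calc 4 * (E / 2 ^ n) / (1 - ρ) + D (n + 1) / 2
          ≤ 4 * (E / 2 ^ n) / (1 - ρ) + E / 2 ^ n / (1 - ρ) := by linarith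
        _ = 5 * E / (1 - ρ) / 2 ^ n := by ring
  refine ⟨fun n => (X n).1, fun n => (X n).2.1, fun n => (X n).2.2, by simp only [hX0],
    by simp only [hX0], by simp only [hX0], fun n => (hX n).1, fun n => (hX n).2.1,
    fun n => (hX n).2.2⟩

theorem LipBPBWith.lipBPBCompactWith_of_ACKWith {M Y : Type*} [MetricSpace M] [CompleteSpace M]
    [NormedAddCommGroup Y] [NormedSpace ℝ Y] [CompleteSpace Y] {z : M} {η : ℝ → ℝ}
    (hη : LipBPBWith M z ℝ η) {ρ : ℝ} {Γ : Set (Y →L[ℝ] ℝ)} (hΓ : ACKWith Y ρ Γ)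
    (hρ0 : 0 ≤ ρ) (hρ1 : ρ < 1) :
    LipBPBCompactWith M z Y
      (fun ε => min (η (min ε 1 * (1 - ρ) / 16)) (min ε 1 * (1 - ρ) / 16) / 2) := by
  have h1ρ : 0 < 1 - ρ := by linarith
  set E : ℝ → ℝ := fun ε => min ε 1 * (1 - ρ) / 16
  have hE0 : ∀ ε > 0, 0 < E ε := fun ε hε => by have := lt_min hε one_pos; positivity
  have hmin : ∀ ε > 0, ∀ n : ℕ, 0 < min (η (E ε / 2 ^ n)) (E ε / 2 ^ n) := fun ε hε n => by
    have := hE0 ε hε; exact lt_min (hη.1 _ (by positivity)) (by positivity)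
  refine ⟨fun ε hε => half_pos (by simpa only [pow_zero, div_one] using hmin ε hε 0),
    fun ε hε F hF0 hFc hF1 p q hpq hFpq => ?_⟩
  have hEε : 16 * E ε ≤ min ε 1 := by simp only [E]; nlinarith [(lt_min hε one_pos).le]
  obtain ⟨Gs, ps, qs, rfl, rfl, rfl, hGs, hclose, hdrift⟩ :=
    exists_seq_nearly_attaining hΓ hη hρ0 hρ1 (hE0 ε hε)
      (by simp only [E]; nlinarith [min_le_right ε 1]) (fun n => half_pos (hmin ε hε n))
      (fun n => (half_le_self (hmin ε hε n).le).trans (min_le_right _ _))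
      (fun n => (half_le_self (hmin ε hε n).le).trans (min_le_left _ _)) hF0 hFc hF1 hpq
      (by simpa using hFpq)
  have hD : ∀ n, min (η (E ε / 2 ^ n)) (E ε / 2 ^ n) / 2 ≤ E ε / 2 ^ n := fun n =>
    (half_le_self (hmin ε hε n).le).trans (min_le_right _ _)
  obtain ⟨G, hG0, hGc, r, s, hrs, hGrs, hG1, hGF, hdist⟩ := exists_attaining_of_seq hGs
    (squeeze_zero (fun n => (half_pos (hmin ε hε n)).le) hD (tendsto_div_two_pow (E ε)))
    hclose hdrift (hE0 ε hε).le (by linarith [min_le_right ε 1])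
  have hd := dist_pos.2 hpq
  refine ⟨G, hG0, hGc, r, s, hrs, hGrs, hG1, (hGF.lipNorm_le (by positivity)).trans_lt ?_,
    (div_lt_iff₀ hd).2 (hdist.trans_lt ?_)⟩
  · rw [mul_div_assoc', div_lt_iff₀ h1ρ]
    simp only [E]
    nlinarith [min_le_left ε 1, lt_min hε one_pos]
  · nlinarith [min_le_left ε 1]

/-- If `(M, ℝ)` has the Lip-BPB property and `Y` has ACK structure with parameter `ρ ∈ [0,1)`,
then `(M, Y)` has the Lip-BPB property for Lipschitz compact maps. -/
theorem lipBPBCompact_of_ACK {M Y : Type*} [MetricSpace M] [CompleteSpace M]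
    [NormedAddCommGroup Y] [NormedSpace ℝ Y] [CompleteSpace Y]
    (z : M) (hM : LipBPB M z ℝ)
    (ρ : ℝ) (hρ0 : 0 ≤ ρ) (hρ1 : ρ < 1) (hY : HasACK Y ρ) :
    LipBPBCompact M z Y := by
  obtain ⟨η, hη⟩ := hM
  obtain ⟨Γ, hΓ⟩ := hY
  exact ⟨_, hη.lipBPBCompactWith_of_ACKWith hΓ hρ0 hρ1⟩
end
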